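/- Let π, G, V, p, H, G*, K be as in the minimal counterexample setup, let W = ⟨V^g : g ∈ G*⟩ be the normal closure of V in G*, and let G⁰ = N_{G*}(GW) be the normalizer in G* of the subgroup GW. Then there exists a π-maximal subgroup M of G⁰ such that H = M ∩ G. -/

import Mathlib

/-- A subgroup is a `π`-group if every prime dividing its order lies in `π`. -/
def IsPiGroup (π : Set ℕ) {G : Type*} [Group G] (H : Subgroup G) : Prop :=
  ∀ p : ℕ, p.Prime → p ∣ Nat.card H → p ∈ π

/-- A subgroup is `π`-maximal if it is a `π`-group not properly contained
in any `π`-subgroup. -/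
def IsPiMaximal (π : Set ℕ) {G : Type*} [Group G] (H : Subgroup G) : Prop :=
  IsPiGroup π H ∧ ∀ K : Subgroup G, IsPiGroup π K → H ≤ K → K = H

/-- `A` is normal in `B` (as subgroups of an ambient group). -/
def NormalIn {G : Type*} [Group G] (A B : Subgroup G) : Prop :=
  A ≤ B ∧ ∀ b ∈ B, ∀ a ∈ A, b * a * b⁻¹ ∈ A

/-- A subgroup is subnormal if it is connected to the whole group by a
finite chain, each term normal in the next. -/
def IsSubnormal {G : Type*} [Group G] (A : Subgroup G) : Prop :=
  Relation.ReflTransGen NormalIn A ⊤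

/-- A witness to the `π`-submaximality of `H ≤ G`: a finite group `carrier`,
an embedding `ε : G → carrier` with subnormal image, and a `π`-maximal
subgroup `K` of `carrier` with `ε(H) = ε(G) ∩ K`. -/
structure PiSubmaximalWitness (π : Set ℕ) (G : Type u) [Group G] (H : Subgroup G) :
    Type (u + 1) where
  carrier : Type u
  [grp : Group carrier]
  [fin : Finite carrier]
  ε : G →* carrier
  inj : Function.Injective ε
  subnormal : IsSubnormal ε.range
  K : Subgroup carrier
  maxK : IsPiMaximal π K
  eq : H.map ε = ε.range ⊓ K

/-- A subgroup `H ≤ G` is `π`-submaximal if `G` embeds as a subnormal subgroup into a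
finite group `G*` in which a `π`-maximal subgroup intersects `G` in `H`. -/
def IsPiSubmaximal (π : Set ℕ) {G : Type u} [Group G] (H : Subgroup G) : Prop :=
  Nonempty (PiSubmaximalWitness π G H)

/-- A minimal normal subgroup: nontrivial, normal, containing no nontrivial
proper normal subgroup of the ambient group. -/
def IsMinimalNormal {G : Type*} [Group G] (U : Subgroup G) : Prop :=
  U.Normal ∧ U ≠ ⊥ ∧ ∀ M : Subgroup G, M.Normal → M ≤ U → M = ⊥ ∨ M = U

/-- `M` is a `π`-maximal subgroup of the subgroup `B` of the ambient group:
`M ≤ B`, `M` is a `π`-group, and `M` is maximal among `π`-subgroups of `B`. -/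
def IsPiMaximalIn (π : Set ℕ) {G : Type*} [Group G] (B M : Subgroup G) : Prop :=
  M ≤ B ∧ IsPiGroup π M ∧ ∀ K : Subgroup G, K ≤ B → IsPiGroup π K → M ≤ K → K = M

/-!
Wielandt's theory of subnormal subgroups does the work. Since `V` is a subnormal `p`-subgroup of
`G*`, it lies in a normal `p`-subgroup, so `W` is a `p`-group; hence `W ≤ K` and, `G/V` being
nonabelian simple, `W ∩ G = V`. Let `M` be a `π`-maximal subgroup of `G⁰` containing `K ∩ G⁰`,
so `H = G ∩ K ≤ G ∩ M`. Modulo `W`, `E = GW/W ≅ G/V` is a nonabelian simple subnormal subgroup and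
`K/W` is `π`-maximal. The `π`-group `M/W ∩ E` is normalized by `N_{K/W}(E) ≤ M/W`, and distinct
`K`-conjugates of `E` commute, so the `K`-conjugates of `M/W ∩ E` generate a `π`-group normalized
by `K/W`; by maximality it lies in `K/W`. Pulling back, `G ∩ M ≤ K`.
-/

open scoped Pointwise commutatorElement

section Subnormal

variable {X Y : Type*} [Group X] [Group Y]

theorem normalIn_iff_le_normalizer {A B : Subgroup X} :
    NormalIn A B ↔ A ≤ B ∧ B ≤ Subgroup.normalizer A := by
  refine and_congr_right fun _ => ⟨fun h b hb => ?_, fun h b hb a ha => ?_⟩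
  · refine Subgroup.mem_normalizer_iff.mpr fun a => ⟨h b hb a, fun ha => ?_⟩
    simpa [mul_assoc] using h b⁻¹ (B.inv_mem hb) _ ha
  · exact (Subgroup.mem_normalizer_iff.mp (h hb) a).mp ha

theorem normalIn_top_iff {A : Subgroup X} : NormalIn A ⊤ ↔ A.Normal :=
  ⟨fun h => ⟨fun a ha g => h.2 g trivial a ha⟩, fun h => ⟨le_top, fun g _ a ha => h.conj_mem a ha g⟩⟩

theorem NormalIn.map {A B : Subgroup X} (h : NormalIn A B) (f : X →* Y) :
    NormalIn (A.map f) (B.map f) := by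
  refine ⟨Subgroup.map_mono h.1, ?_⟩
  rintro - ⟨b, hb, rfl⟩ - ⟨a, ha, rfl⟩
  exact ⟨b * a * b⁻¹, h.2 b hb a ha, by simp⟩

theorem NormalIn.inf_right {A B : Subgroup X} (h : NormalIn A B) (C : Subgroup X) :
    NormalIn (A ⊓ C) (B ⊓ C) :=
  ⟨inf_le_inf_right C h.1, fun b hb a ha =>
    ⟨h.2 b hb.1 a ha.1, C.mul_mem (C.mul_mem hb.2 ha.2) (C.inv_mem hb.2)⟩⟩

theorem NormalIn.smul {α : Type*} [Monoid α] [MulDistribMulAction α X] {A B : Subgroup X}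
    (h : NormalIn A B) (a : α) : NormalIn (a • A) (a • B) :=
  h.map _

abbrev SubnormalIn (A B : Subgroup X) : Prop :=
  Relation.ReflTransGen NormalIn A B

namespace SubnormalIn

variable {A B C : Subgroup X}

theorem le (h : SubnormalIn A B) : A ≤ B := by
  induction h with
  | refl => exact le_rfl
  | tail _ hCB ih => exact ih.trans hCB.1

theorem inf_right (h : SubnormalIn A B) (C : Subgroup X) : SubnormalIn (A ⊓ C) (B ⊓ C) := by
  induction h with
  | refl => exact .refl
  | tail _ hN ih => exact ih.tail (hN.inf_right C)

theorem of_le_of_le (h : SubnormalIn A B) (hAC : A ≤ C) (hCB : C ≤ B) : SubnormalIn A C := by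
  simpa [inf_eq_left.mpr hAC, inf_eq_right.mpr hCB] using h.inf_right C

theorem map (h : SubnormalIn A B) (f : X →* Y) : SubnormalIn (A.map f) (B.map f) := by
  induction h with
  | refl => exact .refl
  | tail _ hN ih => exact ih.tail (hN.map f)

theorem map_top (h : SubnormalIn A ⊤) {f : X →* Y} (hf : Function.Surjective f) :
    SubnormalIn (A.map f) ⊤ := by
  simpa [Subgroup.map_top_of_surjective f hf] using h.map f

theorem smul {α : Type*} [Group α] [MulDistribMulAction α X] (h : SubnormalIn A ⊤) (a : α) :
    SubnormalIn (a • A) ⊤ :=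
  h.map_top (MulAction.surjective a)

end SubnormalIn

end Subnormal

section Wielandt

variable {X : Type*} [Group X]

def IsNonabelianSimple (E : Subgroup X) : Prop :=
  ⁅E, E⁆ ≠ ⊥ ∧ ∀ M : Subgroup X, NormalIn M E → M = ⊥ ∨ M = E

theorem normalIn_commutator_self (E : Subgroup X) : NormalIn ⁅E, E⁆ E := by
  refine normalIn_iff_le_normalizer.mpr ⟨Subgroup.commutator_le_self E, fun e he => ?_⟩
  rw [Subgroup.mem_normalizer_iff_map_conj_eq, Subgroup.map_commutator,
    Subgroup.mem_normalizer_iff_map_conj_eq.mp (Subgroup.le_normalizer he)]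

theorem SubnormalIn.commutator_eq_bot {E B Z : Subgroup X} (hE : SubnormalIn E B)
    (hperf : ⁅E, E⁆ = E) (hZ : NormalIn Z B) (hEZ : E ⊓ Z = ⊥) : ⁅E, Z⁆ = ⊥ := by
  induction hE generalizing Z with
  | refl => rw [show Z = ⊥ from eq_bot_iff.mpr (hEZ ▸ le_inf hZ.1 le_rfl),
      Subgroup.commutator_bot_right]
  | @tail Y B' hEY hYB ih =>
    have hEY : E ≤ Y := SubnormalIn.le hEY
    have hEYZ : ⁅E, Y ⊓ Z⁆ = ⊥ :=
      ih (by simpa only [inf_comm Z, inf_eq_right.mpr hYB.1] using hZ.inf_right Y)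
        (eq_bot_iff.mpr (hEZ ▸ inf_le_inf_left E inf_le_right))
    have hcomm : ⁅E, Z⁆ ≤ Y ⊓ Z := by
      rw [Subgroup.commutator_le]
      intro e he z hz
      refine ⟨?_, ?_⟩
      · rw [commutatorElement_def, mul_assoc, mul_assoc, ← mul_assoc z]
        exact Y.mul_mem (hEY he) (hYB.2 z (hZ.1 hz) _ (Y.inv_mem (hEY he)))
      · rw [commutatorElement_def]
        exact Z.mul_mem (hZ.2 e (hYB.1 (hEY he)) z hz) (Z.inv_mem hz)
    -- `E` centralizes `Y ⊓ Z ≥ ⁅E, Z⁆`; conclude by the three subgroups lemma, as `E` is perfect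
    have h1 : ⁅⁅E, Z⁆, E⁆ = ⊥ := by
      rw [Subgroup.commutator_comm, eq_bot_iff, ← hEYZ]
      exact Subgroup.commutator_mono le_rfl hcomm
    have h2 : ⁅⁅Z, E⁆, E⁆ = ⊥ := by rwa [Subgroup.commutator_comm Z E]
    simpa [hperf] using Subgroup.commutator_commutator_eq_bot_of_rotate h1 h2

namespace IsNonabelianSimple

variable {E F : Subgroup X}

theorem commutator_self (hE : IsNonabelianSimple E) : ⁅E, E⁆ = E :=
  (hE.2 _ (normalIn_commutator_self E)).resolve_left hE.1

theorem ne_bot (hE : IsNonabelianSimple E) : E ≠ ⊥ := fun h =>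
  hE.1 (by rw [h, Subgroup.commutator_bot_left])

theorem eq_bot_or_eq_of_subnormalIn {A : Subgroup X} (hE : IsNonabelianSimple E)
    (h : SubnormalIn A E) : A = ⊥ ∨ A = E := by
  induction h with
  | refl => exact .inr rfl
  | @tail Y B hAY hYB ih =>
    rcases hE.2 Y hYB with rfl | rfl
    · exact .inl (le_bot_iff.mp (SubnormalIn.le hAY))
    · exact ih hE

theorem smul {α : Type*} [Group α] [MulDistribMulAction α X] (hE : IsNonabelianSimple E)
    (a : α) : IsNonabelianSimple (a • E) := by
  have smul_eq_bot : ∀ {M : Subgroup X}, a • M = ⊥ → M = ⊥ := fun {M} h => by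
    rw [← inv_smul_smul a M, h, Subgroup.smul_bot]
  refine ⟨fun h => hE.1 (smul_eq_bot ?_), fun M hM => ?_⟩
  · exact (Subgroup.map_commutator _ _ _).trans h
  · have hM' : NormalIn (a⁻¹ • M) (a⁻¹ • a • E) := hM.smul a⁻¹
    rw [inv_smul_smul] at hM'
    rcases hE.2 _ hM' with h | h
    · exact .inl (by rw [← smul_inv_smul a M, h, Subgroup.smul_bot])
    · exact .inr (by rw [← smul_inv_smul a M, h])

/-- Wielandt's lemma. -/
theorem le_or_commutator_eq_bot {B N : Subgroup X} (hE : IsNonabelianSimple E)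
    (hEB : SubnormalIn E B) (hNB : SubnormalIn N B) : E ≤ N ∨ ⁅E, N⁆ = ⊥ := by
  induction hNB with
  | refl => exact .inl hEB.le
  | @tail Y B' hNY hYB ih =>
    have hEYE : NormalIn (E ⊓ Y) E := by
      simpa only [inf_comm Y, inf_eq_right.mpr hEB.le] using hYB.inf_right E
    rcases hE.2 _ hEYE with h | h
    · refine .inr (eq_bot_iff.mpr ?_)
      rw [← hEB.commutator_eq_bot hE.commutator_self hYB h]
      exact Subgroup.commutator_mono le_rfl (SubnormalIn.le hNY)
    · exact ih (hEB.of_le_of_le (inf_eq_left.mp h) hYB.1)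

theorem commutator_eq_bot_of_ne (hE : IsNonabelianSimple E) (hF : IsNonabelianSimple F)
    (hEsn : SubnormalIn E ⊤) (hFsn : SubnormalIn F ⊤) (hEF : E ≠ F) : ⁅E, F⁆ = ⊥ :=
  (hE.le_or_commutator_eq_bot hEsn hFsn).resolve_left fun hle =>
    (hF.eq_bot_or_eq_of_subnormalIn (hEsn.of_le_of_le hle le_top)).elim hE.ne_bot hEF

end IsNonabelianSimple

end Wielandt

section PiGroup

variable {X Y : Type*} [Group X] [Group Y] {π : Set ℕ}

namespace IsPiGroup

variable {A B : Subgroup X}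

theorem of_card_dvd (hB : IsPiGroup π B) (h : Nat.card A ∣ Nat.card B) : IsPiGroup π A :=
  fun q hq hqA => hB q hq (hqA.trans h)

theorem of_card_dvd_mul {C : Subgroup Y} (hA : IsPiGroup π A) (hC : IsPiGroup π C)
    (h : Nat.card B ∣ Nat.card A * Nat.card C) : IsPiGroup π B := fun q hq hqB =>
  ((Nat.Prime.dvd_mul hq).mp (hqB.trans h)).elim (hA q hq) (hC q hq)

theorem mono {π' : Set ℕ} (hA : IsPiGroup π A) (hπ : π ⊆ π') : IsPiGroup π' A :=
  fun q hq hqA => hπ (hA q hq hqA)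

theorem bot : IsPiGroup π (⊥ : Subgroup X) := fun q hq hq1 => by
  rw [Subgroup.card_bot, Nat.dvd_one] at hq1
  exact absurd hq1 hq.ne_one

theorem of_le (hB : IsPiGroup π B) (h : A ≤ B) : IsPiGroup π A :=
  hB.of_card_dvd (Subgroup.card_dvd_of_le h)

theorem map (hA : IsPiGroup π A) (f : X →* Y) : IsPiGroup π (A.map f) :=
  fun q hq hqA => hA q hq (hqA.trans (A.card_map_dvd f))

theorem smul {α : Type*} [Monoid α] [MulDistribMulAction α X] (hA : IsPiGroup π A) (a : α) :
    IsPiGroup π (a • A) :=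
  hA.map _

theorem sup_of_le_normalizer (hA : IsPiGroup π A) (hB : IsPiGroup π B)
    (hAB : A ≤ Subgroup.normalizer B) : IsPiGroup π (A ⊔ B) := by
  refine hA.of_card_dvd_mul hB ?_
  have := Subgroup.normal_subgroupOf_of_le_normalizer hAB
  have := Subgroup.normal_subgroupOf_sup_of_le_normalizer hAB
  have hB' : Nat.card (B.subgroupOf (A ⊔ B)) = Nat.card B :=
    Nat.card_congr (Subgroup.subgroupOfEquivOfLe le_sup_right).toEquiv
  rw [Subgroup.card_eq_card_quotient_mul_card_subgroup (B.subgroupOf (A ⊔ B)), hB',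
    ← Nat.card_congr (QuotientGroup.quotientInfEquivProdNormalizerQuotient A B hAB).toEquiv]
  exact Nat.mul_dvd_mul_right (Subgroup.card_quotient_dvd_card _) _

theorem of_map (f : X →* Y) (hker : IsPiGroup π (A ⊓ f.ker)) (hmap : IsPiGroup π (A.map f)) :
    IsPiGroup π A := by
  refine hker.of_card_dvd_mul hmap (dvd_of_eq ?_)
  rw [← A.relIndex_ker f, ← Subgroup.inf_relIndex_left, ← Subgroup.relIndex_bot_left,
    ← Subgroup.relIndex_bot_left, Subgroup.relIndex_mul_relIndex _ _ _ bot_le inf_le_left]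

theorem iSup {ι : Type*} [Finite ι] {f : ι → Subgroup X}
    (hf : ∀ i, IsPiGroup π (f i)) (hn : ∀ i j, f i ≤ Subgroup.normalizer (f j)) :
    IsPiGroup π (⨆ i, f i) := by
  classical
  have := Fintype.ofFinite ι
  set N := ⨅ j, Subgroup.normalizer (f j : Set X)
  rw [← Finset.sup_univ_eq_iSup]
  refine (Finset.sup_induction (p := fun S => IsPiGroup π S ∧ S ≤ N ∧ N ≤ Subgroup.normalizer S)
    ⟨bot, bot_le, by rw [Subgroup.normalizer_eq_top]; exact le_top⟩ (fun S hS T hT => ⟨?_, ?_, ?_⟩)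
    fun i _ => ⟨hf i, le_iInf (hn i), iInf_le _ i⟩).1
  · exact hS.1.sup_of_le_normalizer hT.1 (hS.2.1.trans hT.2.2)
  · exact sup_le hS.2.1 hT.2.1
  · exact (le_inf hS.2.2 hT.2.2).trans (Subgroup.normalizer_inf_normalizer_le_normalizer_sup _ _)

end IsPiGroup

theorem isPiGroup_singleton_iff [Finite X] {p : ℕ} [Fact p.Prime] {A : Subgroup X} :
    IsPiGroup {p} A ↔ IsPGroup p A := by
  rw [IsPGroup.iff_card]
  refine ⟨fun h => ⟨_, Nat.eq_prime_pow_of_unique_prime_dvd Nat.card_pos.ne'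
    fun hq hqA => h _ hq hqA⟩, fun ⟨n, hn⟩ q hq hqA => ?_⟩
  rw [hn] at hqA
  exact (Nat.prime_dvd_prime_iff_eq hq Fact.out).mp (hq.dvd_of_dvd_pow hqA)

theorem exists_le_isPiMaximalIn [Finite X] {B L : Subgroup X} (hLB : L ≤ B)
    (hL : IsPiGroup π L) : ∃ M, L ≤ M ∧ IsPiMaximalIn π B M := by
  obtain ⟨M, hLM, hM⟩ := (Set.toFinite {M : Subgroup X | M ≤ B ∧ IsPiGroup π M}).exists_le_maximal
    (show L ∈ {M : Subgroup X | M ≤ B ∧ IsPiGroup π M} from ⟨hLB, hL⟩)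
  exact ⟨M, hLM, hM.1.1, hM.1.2, fun K hKB hK hMK => (hM.2 ⟨hKB, hK⟩ hMK).antisymm hMK⟩

namespace IsPiMaximal

variable {K : Subgroup X}

theorem le_of_normal (hK : IsPiMaximal π K) {N : Subgroup X} [N.Normal] (hN : IsPiGroup π N) :
    N ≤ K := by
  rw [← hK.2 _ (hK.1.sup_of_le_normalizer hN (by rw [Subgroup.normalizer_eq_top]; exact le_top)) le_sup_left]
  exact le_sup_right

theorem map_mk (hK : IsPiMaximal π K) (N : Subgroup X) [N.Normal] (hN : IsPiGroup π N) :
    IsPiMaximal π (K.map (QuotientGroup.mk' N)) := by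
  refine ⟨hK.1.map _, fun L hL hKL => ?_⟩
  have hsurj := QuotientGroup.mk'_surjective N
  have hL' : IsPiGroup π (L.comap (QuotientGroup.mk' N)) := by
    refine IsPiGroup.of_map (QuotientGroup.mk' N) (hN.of_le ?_) ?_
    · rw [QuotientGroup.ker_mk']; exact inf_le_right
    · rwa [Subgroup.map_comap_eq_self_of_surjective hsurj]
  rw [← Subgroup.map_comap_eq_self_of_surjective hsurj L,
    hK.2 _ hL' (Subgroup.map_le_iff_le_comap.mp hKL)]

end IsPiMaximal

end PiGroup

section ConjClosure

variable {X : Type*} [Group X]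

theorem Subgroup.smul_iSup {α ι : Type*} [Monoid α] [MulDistribMulAction α X] (a : α)
    (S : ι → Subgroup X) : a • ⨆ i, S i = ⨆ i, a • S i :=
  Subgroup.map_iSup _ S

def conjClosure (L S : Subgroup X) : Subgroup X :=
  ⨆ l : L, ConjAct.toConjAct (l : X) • S

theorem le_conjClosure (L S : Subgroup X) : S ≤ conjClosure L S :=
  le_iSup_of_le (1 : L) (by simp)

theorem le_normalizer_conjClosure (L S : Subgroup X) :
    L ≤ Subgroup.normalizer (conjClosure L S) := fun l hl => by
  rw [← Subgroup.conjAct_pointwise_smul_iff, conjClosure, Subgroup.smul_iSup]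
  refine (Equiv.mulLeft (⟨l, hl⟩ : L)).iSup_congr fun l' => ?_
  rw [Equiv.coe_mulLeft, Subgroup.coe_mul, map_mul, mul_smul]

end ConjClosure

section Closure

variable {X : Type*} [Group X] [Finite X] {π : Set ℕ}

theorem SubnormalIn.exists_isPiGroup_normalIn {A B : Subgroup X} (h : SubnormalIn A B)
    (hA : IsPiGroup π A) : ∃ P, A ≤ P ∧ NormalIn P B ∧ IsPiGroup π P := by
  induction h with
  | refl => exact ⟨A, le_rfl, normalIn_iff_le_normalizer.mpr ⟨le_rfl, Subgroup.le_normalizer⟩, hA⟩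
  | @tail Y B _ hYB ih =>
    obtain ⟨P, hAP, hPY, hP⟩ := ih
    -- `B` normalizes `Y`, so the `B`-conjugates of `P` are normal in `Y` and generate a `π`-group
    have hconj : ∀ b : B, NormalIn (ConjAct.toConjAct (b : X) • P) Y := fun b => by
      simpa only [Subgroup.conjAct_pointwise_smul_eq_self
        ((normalIn_iff_le_normalizer.mp hYB).2 b.2)] using hPY.smul (ConjAct.toConjAct (b : X))
    refine ⟨conjClosure B P, hAP.trans (le_conjClosure B P), normalIn_iff_le_normalizer.mpr
      ⟨iSup_le fun b => (hconj b).1.trans hYB.1, le_normalizer_conjClosure B P⟩,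
      IsPiGroup.iSup (fun b => hP.smul _) fun b b' => ?_⟩
    exact (hconj b).1.trans (normalIn_iff_le_normalizer.mp (hconj b')).2

theorem SubnormalIn.isPiGroup_normalClosure {A : Subgroup X} (h : SubnormalIn A ⊤)
    (hA : IsPiGroup π A) : IsPiGroup π (Subgroup.normalClosure (A : Set X)) := by
  obtain ⟨P, hAP, hP, hPπ⟩ := h.exists_isPiGroup_normalIn hA
  have := normalIn_top_iff.mp hP
  exact hPπ.of_le (Subgroup.normalClosure_le_normal hAP)

theorem IsNonabelianSimple.le_of_isPiMaximal {E K T : Subgroup X} (hE : IsNonabelianSimple E)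
    (hEsn : SubnormalIn E ⊤) (hK : IsPiMaximal π K) (hT : IsPiGroup π T) (hTE : T ≤ E)
    (hKT : K ⊓ Subgroup.normalizer E ≤ Subgroup.normalizer T) : T ≤ K := by
  -- Two `K`-conjugates of `E` coincide, and then so do the corresponding conjugates of `T`, or
  -- they commute. So the `K`-conjugates of `T` generate a `π`-group normalized by `K`.
  have hf : ∀ k k' : K, ConjAct.toConjAct (k : X) • T ≤
      Subgroup.normalizer (ConjAct.toConjAct (k' : X) • T) := by
    intro k k'
    by_cases hkk' : ConjAct.toConjAct (k : X) • E = ConjAct.toConjAct (k' : X) • E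
    · have hk : ((k⁻¹ * k' : K) : X) ∈ K ⊓ Subgroup.normalizer E := by
        refine ⟨(k⁻¹ * k').2, Subgroup.conjAct_pointwise_smul_iff.mp ?_⟩
        rw [Subgroup.coe_mul, map_mul, mul_smul, ← hkk', InvMemClass.coe_inv, map_inv,
          inv_smul_smul]
      have hkk'T : ConjAct.toConjAct (k : X) • T = ConjAct.toConjAct (k' : X) • T := by
        conv_lhs => rw [← Subgroup.conjAct_pointwise_smul_eq_self (hKT hk)]
        rw [smul_smul, ← map_mul, ← Subgroup.coe_mul, mul_inv_cancel_left]
      rw [hkk'T]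
      exact Subgroup.le_normalizer
    · have hcomm := (hE.smul _).commutator_eq_bot_of_ne (hE.smul _) (hEsn.smul _) (hEsn.smul _) hkk'
      refine le_trans ?_ (Subgroup.centralizer_le_normalizer _)
      exact (Subgroup.pointwise_smul_le_pointwise_smul_iff.mpr hTE).trans
        ((Subgroup.commutator_eq_bot_iff_le_centralizer.mp hcomm).trans
          (Subgroup.centralizer_le (Subgroup.pointwise_smul_le_pointwise_smul_iff.mpr hTE)))
  have hπ : IsPiGroup π (conjClosure K T) :=
    IsPiGroup.iSup (f := fun k : K => ConjAct.toConjAct (k : X) • T) (fun k => hT.smul _) hf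
  have hKsup : K ⊔ conjClosure K T = K :=
    hK.2 _ (hK.1.sup_of_le_normalizer hπ (le_normalizer_conjClosure K T)) le_sup_left
  exact (le_conjClosure K T).trans (sup_eq_left.mp hKsup)

theorem IsPiMaximal.inf_le_of_subnormalIn {K W R M : Subgroup X} [W.Normal]
    (hK : IsPiMaximal π K) (hW : IsPiGroup π W)
    (hR : IsNonabelianSimple (R.map (QuotientGroup.mk' W))) (hRsn : SubnormalIn R ⊤)
    (hM : IsPiGroup π M) (hKM : K ⊓ Subgroup.normalizer (R ⊔ W : Subgroup X) ≤ M) :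
    R ⊓ M ≤ K := by
  set mk := QuotientGroup.mk' W
  have hmk : Function.Surjective mk := QuotientGroup.mk'_surjective W
  have hKE : K.map mk ⊓ Subgroup.normalizer (R.map mk) ≤ M.map mk := by
    rintro - ⟨⟨k, hk, rfl⟩, hkE⟩
    have hkE' : k ∈ (Subgroup.normalizer (R.map mk : Set _)).comap mk := hkE
    rw [Subgroup.comap_normalizer_eq_of_surjective _ hmk, Subgroup.comap_map_eq,
      QuotientGroup.ker_mk'] at hkE'
    exact ⟨k, hKM ⟨hk, hkE'⟩, rfl⟩
  have hME : M.map mk ⊓ R.map mk ≤ K.map mk :=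
    hR.le_of_isPiMaximal (SubnormalIn.map_top hRsn hmk) (hK.map_mk W hW)
      ((hM.map mk).of_le inf_le_left) inf_le_right
      ((le_inf (hKE.trans Subgroup.le_normalizer) inf_le_right).trans
        Subgroup.inf_normalizer_le_normalizer_inf)
  rintro x ⟨hxR, hxM⟩
  have hx : mk x ∈ K.map mk := hME ⟨⟨x, hxM, rfl⟩, ⟨x, hxR, rfl⟩⟩
  rwa [← Subgroup.mem_comap, Subgroup.comap_map_eq_self
    (by rw [QuotientGroup.ker_mk']; exact hK.le_of_normal hW)] at hx

end Closure

section SimpleQuotient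

variable {G Q : Type*} [Group G] [Group Q] {V : Subgroup G} [V.Normal]

theorem eq_or_eq_top_of_le_of_isSimpleGroup (hs : IsSimpleGroup (G ⧸ V)) {N : Subgroup G}
    (hN : N.Normal) (hVN : V ≤ N) : N = V ∨ N = ⊤ := by
  refine (hs.eq_bot_or_eq_top_of_normal _ (hN.map _ (QuotientGroup.mk'_surjective V))).imp
    (fun h => ?_) fun h => ?_
  · rw [Subgroup.map_eq_bot_iff, QuotientGroup.ker_mk'] at h
    exact h.antisymm hVN
  · have hN' := Subgroup.comap_map_eq_self (f := QuotientGroup.mk' V) (H := N)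
      (by rwa [QuotientGroup.ker_mk'])
    rwa [h, Subgroup.comap_top, eq_comm] at hN'

theorem eq_of_le_of_isPGroup [Finite G] {p : ℕ} [Fact p.Prime] (hs : IsSimpleGroup (G ⧸ V))
    (hnc : ∃ a b : G ⧸ V, a * b ≠ b * a) {N : Subgroup G} (hN : N.Normal) (hVN : V ≤ N)
    (hNp : IsPGroup p N) : N = V := by
  refine (eq_or_eq_top_of_le_of_isSimpleGroup hs hN hVN).resolve_right fun htop => ?_
  obtain ⟨a, b, hab⟩ := hnc
  have hG : IsPGroup p G := (htop ▸ hNp).of_equiv Subgroup.topEquiv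
  have := (hG.of_surjective _ (QuotientGroup.mk'_surjective V)).isNilpotent
  exact hab (IsSimpleGroup.comm_iff_isSolvable.mpr inferInstance a b)

theorem isNonabelianSimple_range (hs : IsSimpleGroup (G ⧸ V))
    (hnc : ∃ a b : G ⧸ V, a * b ≠ b * a) (ψ : G →* Q) (hψ : ψ.ker = V) :
    IsNonabelianSimple ψ.range := by
  refine ⟨fun h => ?_, fun M hM => ?_⟩
  · obtain ⟨a, b, hab⟩ := hnc
    obtain ⟨g, rfl⟩ := QuotientGroup.mk'_surjective V a
    obtain ⟨g', rfl⟩ := QuotientGroup.mk'_surjective V b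
    have hgg' : ⁅g, g'⁆ ∈ V := by
      rw [← hψ, MonoidHom.mem_ker, map_commutatorElement, ← Subgroup.mem_bot, ← h]
      exact Subgroup.commutator_mem_commutator ⟨g, rfl⟩ ⟨g', rfl⟩
    apply hab
    rwa [← commutatorElement_eq_one_iff_mul_comm, ← map_commutatorElement,
      QuotientGroup.mk'_apply, QuotientGroup.eq_one_iff]
  · have hMn : (M.comap ψ).Normal :=
      ⟨fun n hn g => by simpa using hM.2 (ψ g) ⟨g, rfl⟩ (ψ n) hn⟩
    have hMr : M = (M.comap ψ).map ψ := (Subgroup.map_comap_eq_self hM.1).symm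
    rcases eq_or_eq_top_of_le_of_isSimpleGroup hs hMn (hψ ▸ ψ.ker_le_comap M) with h | h
    · exact .inl (by rw [hMr, h, Subgroup.map_eq_bot_iff, hψ])
    · exact .inr (by rw [hMr, h, MonoidHom.range_eq_map])

end SimpleQuotient

theorem stmt18_general {G : Type} [Group G] [Finite G] (π : Set ℕ) (p : ℕ)
    (hp : p.Prime) (hpπ : p ∈ π)
    (V : Subgroup G) [nV : V.Normal]
    (hVp : IsPGroup p V)
    (hsimple : IsSimpleGroup (G ⧸ V))
    (hnonab : ∃ a b : G ⧸ V, a * b ≠ b * a)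
    (H : Subgroup G)
    (Gstar : Type) [Group Gstar] [Finite Gstar]
    (ε : G →* Gstar) (hinj : Function.Injective ε) (hsub : IsSubnormal ε.range)
    (K : Subgroup Gstar) (hK : IsPiMaximal π K) (heq : H.map ε = ε.range ⊓ K) :
    ∀ W : Subgroup Gstar,
      W = Subgroup.normalClosure ((V.map ε : Subgroup Gstar) : Set Gstar) →
      ∃ M : Subgroup Gstar,
        IsPiMaximalIn π (Subgroup.normalizer ((ε.range ⊔ W : Subgroup Gstar) : Set Gstar)) M ∧ H.map ε = ε.range ⊓ M := by
  intro W hW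
  have : Fact p.Prime := ⟨hp⟩
  have hWn : W.Normal := hW ▸ Subgroup.normalClosure_normal
  have hVsn : SubnormalIn (V.map ε) ⊤ :=
    .head (by simpa only [MonoidHom.range_eq_map] using (normalIn_top_iff.mpr nV).map ε) hsub
  have hWp : IsPiGroup {p} W :=
    hW ▸ hVsn.isPiGroup_normalClosure (isPiGroup_singleton_iff.mpr (hVp.map ε))
  have hWV : W.comap ε = V :=
    eq_of_le_of_isPGroup hsimple hnonab (hWn.comap ε)
      (Subgroup.map_le_iff_le_comap.mp (hW ▸ Subgroup.le_normalClosure))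
      ((isPiGroup_singleton_iff.mp hWp).comap_of_injective ε hinj)
  have hE : IsNonabelianSimple (ε.range.map (QuotientGroup.mk' W)) := by
    rw [← MonoidHom.range_comp]
    refine isNonabelianSimple_range hsimple hnonab _ ?_
    rw [← MonoidHom.comap_ker, QuotientGroup.ker_mk', hWV]
  set G₀ := Subgroup.normalizer ((ε.range ⊔ W : Subgroup Gstar) : Set Gstar)
  have hrG₀ : ε.range ≤ G₀ := le_sup_left.trans Subgroup.le_normalizer
  obtain ⟨M, hKM, hM⟩ := exists_le_isPiMaximalIn (inf_le_right : K ⊓ G₀ ≤ G₀)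
    (hK.1.of_le inf_le_left)
  refine ⟨M, hM, heq.trans (le_antisymm ?_ ?_)⟩
  · exact le_inf inf_le_left ((le_inf inf_le_right (inf_le_left.trans hrG₀)).trans hKM)
  · exact le_inf inf_le_left (hK.inf_le_of_subnormalIn
      (hWp.mono (Set.singleton_subset_iff.mpr hpπ)) hE hsub hM.2.1 hKM)

/-- In the minimal counterexample setup, with `W` the normal closure of (the image of)
`V` in `G*` and `G⁰ = N_{G*}(GW)`, there is a `π`-maximal subgroup `M` of `G⁰`
with `H = M ∩ G`. -/
theorem stmt18 {G : Type} [Group G] [Finite G] (π : Set ℕ) (p : ℕ)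
    (hp : p.Prime) (hpπ : p ∈ π)
    (V : Subgroup G) [nV : V.Normal]
    (hVmin : IsMinimalNormal V)
    (hVuniq : ∀ U : Subgroup G, IsMinimalNormal U → U = V)
    (hVp : IsPGroup p V)
    (hVZ : ¬ V ≤ Subgroup.center G)
    (hsimple : IsSimpleGroup (G ⧸ V))
    (hnonab : ∃ a b : G ⧸ V, a * b ≠ b * a)
    (H : Subgroup G) (hH : IsPiSubmaximal π H)
    (Gstar : Type) [Group Gstar] [Finite Gstar]
    (ε : G →* Gstar) (hinj : Function.Injective ε) (hsub : IsSubnormal ε.range)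
    (K : Subgroup Gstar) (hK : IsPiMaximal π K) (heq : H.map ε = ε.range ⊓ K)
    (hmin : ∀ w : PiSubmaximalWitness π G H, Nat.card Gstar ≤ Nat.card w.carrier) :
    ∀ W : Subgroup Gstar,
      W = Subgroup.normalClosure ((V.map ε : Subgroup Gstar) : Set Gstar) →
      ∃ M : Subgroup Gstar,
        IsPiMaximalIn π (Subgroup.normalizer ((ε.range ⊔ W : Subgroup Gstar) : Set Gstar)) M ∧ H.map ε = ε.range ⊓ M :=
  stmt18_general π p hp hpπ V (nV := nV) hVp hsimple hnonab H Gstar ε hinj hsub K hK heq
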